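/- Let q > 0 be a real number and let ℓ, m ∈ ℕ. For each j ∈ {1,…,m}, fix abstract branch data (g₁(j), n_j, g_j) satisfying the genus-growth condition, with grope length ‖Σ_j‖^q. Let w : {1,…,ℓ} × {1,…,m} → ℕ be weights and let N ∈ ℕ satisfy Σ_{s=1}^{ℓ} w(s,j) ≤ N for every j. For each s ∈ {1,…,ℓ}, j ∈ {1,…,m} and 1 ≤ i ≤ g₁(j), let h(s,j,i) > 0 be a real number. Then Σ_{s=1}^{ℓ} Σ_{j=1}^{m} w(s,j) · Σ_{i=1}^{g₁(j)} q^{−(n_j(i)+1)} · (1 − Σ_{k=2}^{n_j(i)+1} 1/g_j(i,k) − 1/h(s,j,i)) ≤ (N/q) · Σ_{j=1}^{m} ‖Σ_j‖^q. In particular, when q > N the left-hand side is at most δ · Σ_j ‖Σ_j‖^q with δ = N/q < 1. -/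

import Mathlib

/-!
The genus-growth condition `g(i,k) ≥ 2^(k-1)` bounds `∑_k 1/g(i,k)` by a partial geometric
series, so every branch contributes a nonnegative amount to `‖Σ‖^q`. Raising a branch length
by one divides its contribution by `q`, and the new top stage only subtracts `q^-(n+1)/h ≥ 0`.
Summing over the strands, each `Σ_j` appears with total multiplicity `∑_s w(s,j) ≤ N`, and
nonnegativity of its contribution lets this multiplicity be replaced by `N`.
-/

open Finset

theorem sum_Icc_two_half_pow (n : ℕ) :
    ∑ k ∈ Icc 2 (n + 1), ((1 : ℝ) / 2) ^ (k - 1) = 1 - (1 / 2) ^ n := by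
  induction n with
  | zero => simp
  | succ n ih =>
    rw [sum_Icc_succ_top (by omega), ih, Nat.add_sub_cancel, pow_succ]
    ring

theorem sum_one_div_le_of_two_pow_le {n : ℕ} {g : ℕ → ℝ}
    (hg : ∀ k, 2 ≤ k → k ≤ n + 1 → (2 : ℝ) ^ (k - 1) ≤ g k) :
    ∑ k ∈ Icc 2 (n + 1), 1 / g k ≤ 1 - (1 / 2) ^ n := by
  rw [← sum_Icc_two_half_pow]
  refine sum_le_sum fun k hk => ?_
  obtain ⟨hk₂, hkn⟩ := mem_Icc.mp hk
  rw [one_div_pow]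
  exact one_div_le_one_div_of_le (by positivity) (hg k hk₂ hkn)

theorem sum_one_div_le_one_of_two_pow_le {n : ℕ} {g : ℕ → ℝ}
    (hg : ∀ k, 2 ≤ k → k ≤ n + 1 → (2 : ℝ) ^ (k - 1) ≤ g k) :
    ∑ k ∈ Icc 2 (n + 1), 1 / g k ≤ 1 :=
  (sum_one_div_le_of_two_pow_le hg).trans (sub_le_self _ (by positivity))

theorem one_div_pow_succ_mul_sub_one_div_le {q h : ℝ} (hq : 0 ≤ q) (hh : 0 ≤ h) (n : ℕ)
    (x : ℝ) : 1 / q ^ (n + 1) * (x - 1 / h) ≤ 1 / q * (1 / q ^ n * x) := by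
  have hstage : 0 ≤ 1 / q ^ (n + 1) * (1 / h) := by positivity
  calc 1 / q ^ (n + 1) * (x - 1 / h) = 1 / q ^ (n + 1) * x - 1 / q ^ (n + 1) * (1 / h) := by
        ring
    _ ≤ 1 / q ^ (n + 1) * x := sub_le_self _ hstage
    _ = 1 / q * (1 / q ^ n * x) := by rw [pow_succ]; ring

theorem sum_sum_mul_le_mul_sum {ι κ : Type*} (s : Finset ι) (t : Finset κ)
    {w a : ι → κ → ℝ} {b : κ → ℝ} {N : ℝ}
    (hw : ∀ i ∈ s, ∀ j ∈ t, 0 ≤ w i j) (hwN : ∀ j ∈ t, ∑ i ∈ s, w i j ≤ N)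
    (hab : ∀ i ∈ s, ∀ j ∈ t, a i j ≤ b j) (hb : ∀ j ∈ t, 0 ≤ b j) :
    ∑ i ∈ s, ∑ j ∈ t, w i j * a i j ≤ N * ∑ j ∈ t, b j :=
  calc ∑ i ∈ s, ∑ j ∈ t, w i j * a i j ≤ ∑ i ∈ s, ∑ j ∈ t, w i j * b j :=
        sum_le_sum fun i hi => sum_le_sum fun j hj =>
          mul_le_mul_of_nonneg_left (hab i hi j hj) (hw i hi j hj)
    _ = ∑ j ∈ t, (∑ i ∈ s, w i j) * b j := by rw [sum_comm]; simp only [sum_mul]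
    _ ≤ ∑ j ∈ t, N * b j :=
        sum_le_sum fun j hj => mul_le_mul_of_nonneg_right (hwN j hj) (hb j hj)
    _ = N * ∑ j ∈ t, b j := (mul_sum _ _ _).symm

/-- Quantitative heart of Proposition 5.9 (winding number zero operators are
contractions): for branch data `(g₁ j, len j, g j)` satisfying the genus-growth
condition, weights `w` with `∑_s w s j ≤ N` for every `j`, and new top-stage genera
`h s j i > 0`, the length of the satellite grope (each branch length increased by one
and a new top stage of genus `h s j i` attached, taken with multiplicity `w s j`) is
at most `(N/q) · ∑_j ‖Σ_j‖^q`.  In particular, for `q > N` this exhibits the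
contraction constant `δ = N/q < 1`. -/
theorem satellite_grope_length_contraction (q : ℝ) (hq : 0 < q) (ℓ m : ℕ)
    (g₁ : ℕ → ℕ) (len : ℕ → ℕ → ℕ) (g : ℕ → ℕ → ℕ → ℝ)
    (hgrowth : ∀ j ∈ Finset.Icc 1 m, ∀ i ∈ Finset.Icc 1 (g₁ j),
      ∀ k, 2 ≤ k → k ≤ len j i + 1 → (2 : ℝ) ^ (k - 1) ≤ g j i k)
    (w : ℕ → ℕ → ℕ) (N : ℕ)
    (hw : ∀ j ∈ Finset.Icc 1 m, ∑ s ∈ Finset.Icc 1 ℓ, w s j ≤ N)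
    (h : ℕ → ℕ → ℕ → ℝ)
    (hh : ∀ s ∈ Finset.Icc 1 ℓ, ∀ j ∈ Finset.Icc 1 m, ∀ i ∈ Finset.Icc 1 (g₁ j),
      0 < h s j i) :
    (∑ s ∈ Finset.Icc 1 ℓ, ∑ j ∈ Finset.Icc 1 m, (w s j : ℝ) *
        ∑ i ∈ Finset.Icc 1 (g₁ j),
          (1 / q ^ (len j i + 1)) *
            (1 - ∑ k ∈ Finset.Icc 2 (len j i + 1), 1 / g j i k - 1 / h s j i) ≤
      ((N : ℝ) / q) * ∑ j ∈ Finset.Icc 1 m, ∑ i ∈ Finset.Icc 1 (g₁ j),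
          (1 / q ^ len j i) *
            (1 - ∑ k ∈ Finset.Icc 2 (len j i + 1), 1 / g j i k)) ∧
    ((N : ℝ) < q → (N : ℝ) / q < 1) := by
  refine ⟨?_, (div_lt_one hq).mpr⟩
  have hbranch : ∀ j ∈ Icc 1 m, ∀ i ∈ Icc 1 (g₁ j),
      0 ≤ 1 - ∑ k ∈ Icc 2 (len j i + 1), 1 / g j i k := fun j hj i hi =>
    sub_nonneg.mpr (sum_one_div_le_one_of_two_pow_le (hgrowth j hj i hi))
  calc _ ≤ (N : ℝ) * ∑ j ∈ Icc 1 m, 1 / q * ∑ i ∈ Icc 1 (g₁ j),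
          1 / q ^ len j i * (1 - ∑ k ∈ Icc 2 (len j i + 1), 1 / g j i k) := by
        refine sum_sum_mul_le_mul_sum _ _ (fun _ _ _ _ => Nat.cast_nonneg _)
          (fun j hj => by exact_mod_cast hw j hj) (fun s hs j hj => ?_)
          (fun j hj => mul_nonneg (by positivity)
            (sum_nonneg fun i hi => mul_nonneg (by positivity) (hbranch j hj i hi)))
        rw [mul_sum]
        exact sum_le_sum fun i hi =>
          one_div_pow_succ_mul_sub_one_div_le hq.le (hh s hs j hj i hi).le _ _
    _ = _ := by rw [← mul_sum]; ring
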